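/- arXiv:1111.7177 — 2 statements merged into one kernel-verified Lean document; each statement's English description precedes it below -/
import Mathlib

section
/- Let φ : A → B be a morphism of ℚ-vector spaces (ℚ-modules). If both the kernel and cokernel of φ are finitely generated as ℤ-modules, then φ is an isomorphism. -/
/-- Nakayama's lemma for the ideal `(2)`: since `2` is invertible on `M`, some odd integer `r`
kills `M`, and `r` is invertible on `M` as well. -/
theorem Module.subsingleton_of_finite_int_of_rat {M : Type*} [AddCommGroup M] [Module ℚ M]
    [Module.Finite ℤ M] : Subsingleton M := by
  have h_two_smul_top : (⊤ : Submodule ℤ M) ≤ Ideal.span {(2 : ℤ)} • ⊤ := by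
    intro x _
    have hx : x = (2 : ℤ) • ((2 : ℚ)⁻¹ • x) := by
      rw [← Int.cast_smul_eq_zsmul ℚ, smul_smul]
      norm_num
    rw [hx]
    exact Submodule.smul_mem_smul (Ideal.mem_span_singleton_self 2) trivial
  obtain ⟨r, hr_odd, hr_kills⟩ := Submodule.exists_sub_one_mem_and_smul_eq_zero_of_fg_of_le_smul
    _ ⊤ Module.Finite.fg_top h_two_smul_top
  have hr : (r : ℚ) ≠ 0 := by
    rw [Ideal.mem_span_singleton] at hr_odd
    have : r ≠ 0 := by omega
    exact_mod_cast this
  refine subsingleton_of_forall_eq 0 fun x => ?_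
  rw [← inv_smul_smul₀ hr x, Int.cast_smul_eq_zsmul, hr_kills x trivial, smul_zero]

/-- A morphism of ℚ-modules whose kernel and cokernel are finitely generated
as ℤ-modules is an isomorphism. -/
theorem stmt_0 {A B : Type*} [AddCommGroup A] [Module ℚ A] [AddCommGroup B] [Module ℚ B]
    (φ : A →ₗ[ℚ] B)
    (hker : Module.Finite ℤ (LinearMap.ker φ))
    (hcoker : Module.Finite ℤ (B ⧸ LinearMap.range φ)) :
    Function.Bijective φ := by
  have h_ker : Subsingleton (LinearMap.ker φ) := Module.subsingleton_of_finite_int_of_rat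
  have h_coker : Subsingleton (B ⧸ LinearMap.range φ) := Module.subsingleton_of_finite_int_of_rat
  exact ⟨LinearMap.ker_eq_bot.mp Submodule.eq_bot_of_subsingleton,
    LinearMap.range_eq_top.mp (Submodule.Quotient.subsingleton_iff.mp h_coker)⟩
end

section
/- Let f : X → Y be a continuous, closed, surjective map of topological spaces with connected fibers, and let Y' → Y be a covering map with Y' connected. Then the pullback X ×_Y Y' is connected. -/
/-- Pulling back a connected covering space along a proper (closed, surjective,
connected fibers) map from a connected space yields a connected total space. -/
theorem stmt_2 {X Y Y' : Type*} [TopologicalSpace X] [TopologicalSpace Y]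
    [TopologicalSpace Y']
    (f : X → Y) (hcont : Continuous f) (hclosed : IsClosedMap f)
    (hsurj : Function.Surjective f)
    (hfib : ∀ y : Y, IsConnected (f ⁻¹' {y}))
    (hX : ConnectedSpace X)
    (p : Y' → Y) (hp : IsCoveringMap p) (hY' : ConnectedSpace Y') :
    ConnectedSpace {z : X × Y' // f z.1 = p z.2} := by
  set Z := {z : X × Y' // f z.1 = p z.2} with hZ
  let π : Z → Y' := fun z => z.val.2
  -- surjectivity of π
  have hπsurj : Function.Surjective π := by
    intro y'
    obtain ⟨x, hx⟩ := (hfib (p y')).nonempty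
    exact ⟨⟨(x, y'), hx⟩, rfl⟩
  -- fibers of π are connected
  have hπfib : ∀ y' : Y', IsConnected (π ⁻¹' {y'}) := by
    intro y'
    have h1 : IsConnected (f ⁻¹' {p y'}) := hfib (p y')
    rw [isConnected_iff_connectedSpace] at h1
    have hcφ : Continuous (fun x : (f ⁻¹' {p y'}) => (⟨(x.val, y'), x.prop⟩ : Z)) := by
      apply Continuous.subtype_mk
      exact (continuous_subtype_val.prodMk continuous_const)
    have hr := isConnected_range hcφ
    convert hr using 1
    ext z
    simp only [Set.mem_preimage, Set.mem_singleton_iff, Set.mem_range]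
    constructor
    · rintro hz
      have hz' : z.val.2 = y' := hz
      refine ⟨⟨z.val.1, ?_⟩, ?_⟩
      · simp only [Set.mem_preimage, Set.mem_singleton_iff]
        rw [z.prop, hz']
      · apply Subtype.ext
        exact Prod.ext rfl hz'.symm
    · rintro ⟨x, rfl⟩
      rfl
  -- π is a closed map
  have hπclosed : IsClosedMap π := by
    intro C hC
    rw [← isOpen_compl_iff, isOpen_iff_forall_mem_open]
    intro y' hy'
    obtain ⟨e, hy'e, hpe⟩ := hp.isLocalHomeomorph y'
    -- section over the chart
    have hsec : ∀ x : (f ⁻¹' e.target), f x.val = p (e.symm (f x.val)) := by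
      intro x
      rw [hpe]
      exact (e.right_inv x.prop).symm
    let σ : (f ⁻¹' e.target) → Z := fun x => ⟨(x.val, e.symm (f x.val)), hsec x⟩
    have hσcont : Continuous σ := by
      apply Continuous.subtype_mk
      refine continuous_subtype_val.prodMk ?_
      exact e.continuousOn_symm.comp_continuous (hcont.comp continuous_subtype_val)
        (fun x => x.prop)
    have hA : IsClosed (σ ⁻¹' C) := hC.preimage hσcont
    have hF : IsClosed ((e.target.restrictPreimage f) '' (σ ⁻¹' C)) :=
      (hclosed.restrictPreimage e.target) _ hA
    obtain ⟨D, hD, hDval⟩ := isClosed_induced_iff.mp hF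
    -- p y' ∉ D
    have hpy'T : p y' ∈ e.target := by rw [hpe]; exact e.map_source hy'e
    have hpy'D : p y' ∉ D := by
      intro hmem
      have : (⟨p y', hpy'T⟩ : e.target) ∈ (e.target.restrictPreimage f) '' (σ ⁻¹' C) := by
        rw [← hDval]; exact hmem
      obtain ⟨a, haC, hfa⟩ := this
      have hfa' : f a.val = p y' := congrArg Subtype.val hfa
      apply hy'
      refine ⟨σ a, haC, ?_⟩
      show e.symm (f a.val) = y'
      rw [hfa', hpe]
      exact e.left_inv hy'e
    refine ⟨e.source ∩ p ⁻¹' Dᶜ, ?_, ?_, hy'e, hpy'D⟩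
    · -- subset of complement
      rintro y'' ⟨hy''S, hy''D⟩ ⟨z, hzC, hzπ⟩
      have hzπ' : z.val.2 = y'' := hzπ
      have hfz : f z.val.1 ∈ e.target := by
        rw [z.prop, hzπ', hpe]; exact e.map_source hy''S
      have hsymm : e.symm (f z.val.1) = y'' := by
        rw [z.prop, hzπ', hpe]; exact e.left_inv hy''S
      have hσz : σ ⟨z.val.1, hfz⟩ = z := by
        apply Subtype.ext
        refine Prod.ext rfl ?_
        show e.symm (f z.val.1) = z.val.2
        rw [hzπ']; exact hsymm
      have : (⟨f z.val.1, hfz⟩ : e.target) ∈ (e.target.restrictPreimage f) '' (σ ⁻¹' C) := by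
        refine ⟨⟨z.val.1, hfz⟩, ?_, rfl⟩
        show σ _ ∈ C
        rw [hσz]; exact hzC
      rw [← hDval] at this
      apply hy''D
      have : f z.val.1 ∈ D := this
      rwa [z.prop, hzπ'] at this
    · exact e.open_source.inter (hD.isOpen_compl.preimage hp.continuous)
  -- conclude
  have hne : Nonempty Z := ⟨(hπsurj (Classical.arbitrary Y')).choose⟩
  refine { toNonempty := hne, isPreconnected_univ := ?_ }
  rw [isPreconnected_iff_subset_of_fully_disjoint_closed isClosed_univ]
  intro u v hu hv hcover hd
  have huv : ∀ z : Z, z ∈ u ∨ z ∈ v := fun z => hcover (Set.mem_univ z)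
  have huo : IsClopen u := by
    refine ⟨hu, ?_⟩
    have : u = vᶜ := by
      ext z
      simp only [Set.mem_compl_iff]
      constructor
      · intro hzu hzv
        exact Set.disjoint_left.mp hd hzu hzv
      · intro hzv
        rcases huv z with h | h
        · exact h
        · exact absurd h hzv
    rw [this]; exact hv.isOpen_compl
  have hvo : IsClopen v := by
    refine ⟨hv, ?_⟩
    have : v = uᶜ := by
      ext z
      simp only [Set.mem_compl_iff]
      constructor
      · intro hzv hzu
        exact Set.disjoint_left.mp hd hzu hzv
      · intro hzu
        rcases huv z with h | h
        · exact absurd h hzu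
        · exact h
    rw [this]; exact hu.isOpen_compl
  have fibsub : ∀ w : Y', π ⁻¹' {w} ⊆ u ∨ π ⁻¹' {w} ⊆ v := by
    intro w
    obtain ⟨z, hz⟩ := (hπfib w).nonempty
    rcases huv z with h | h
    · exact Or.inl ((hπfib w).isPreconnected.subset_isClopen huo ⟨z, hz, h⟩)
    · exact Or.inr ((hπfib w).isPreconnected.subset_isClopen hvo ⟨z, hz, h⟩)
  have hYu : IsClosed (π '' u) := hπclosed u hu
  have hYv : IsClosed (π '' v) := hπclosed v hv
  have hYcover : (Set.univ : Set Y') ⊆ π '' u ∪ π '' v := by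
    intro w _
    obtain ⟨z, hz⟩ := hπsurj w
    rcases huv z with h | h
    · exact Or.inl ⟨z, h, hz⟩
    · exact Or.inr ⟨z, h, hz⟩
  have hYdisj : Disjoint (π '' u) (π '' v) := by
    rw [Set.disjoint_left]
    rintro w ⟨z1, hz1u, hz1⟩ ⟨z2, hz2v, hz2⟩
    rcases fibsub w with h | h
    · exact Set.disjoint_left.mp hd (h hz2) hz2v
    · exact Set.disjoint_left.mp hd hz1u (h hz1)
  have := (isPreconnected_iff_subset_of_fully_disjoint_closed isClosed_univ).mp
    hY'.isPreconnected_univ (π '' u) (π '' v) hYu hYv hYcover hYdisj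
  rcases this with h | h
  · left
    intro z _
    obtain ⟨z', hz'u, hz'⟩ := h (Set.mem_univ (π z))
    rcases fibsub (π z) with hf | hf
    · exact hf rfl
    · exact absurd (hf hz') (fun hzv => Set.disjoint_left.mp hd hz'u hzv)
  · right
    intro z _
    obtain ⟨z', hz'v, hz'⟩ := h (Set.mem_univ (π z))
    rcases fibsub (π z) with hf | hf
    · exact absurd (hf hz') (fun hzu => Set.disjoint_left.mp hd hzu hz'v)
    · exact hf rfl
end
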